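/- arXiv:2512.23929 — 8 statements merged into one kernel-verified Lean document; each statement's English description precedes it below -/
import Mathlib

section
/- Let Y be a Hausdorff topological space with a continuous action of ℂˣ, let X ⊆ Y be a closed subset, and let r : Y → Y be a continuous map satisfying r(Y) ⊆ X, r(x) = x for all x ∈ X, and r(t • y) = t • r(y) for all t ∈ ℂˣ, y ∈ Y. Let Fix := {y ∈ Y : ∀ t ∈ ℂˣ, t • y = y}. For a subset W ⊆ Y define A(W) := {(w, w') ∈ W × (W ∩ Fix) : the map t ↦ t • w tends to 𝓝 w' along ℱ (limits taken in Y)}. Then, taking closures in Y × Y, closure(A(Y)) ∩ (X × (X ∩ Fix)) = closure(A(X)). -/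
open Filter Topology

/-- The filter on `ℂˣ` obtained as the comap, along the coercion `ℂˣ → ℂ`, of the
punctured neighborhood filter `𝓝[≠] 0` of `0` in `ℂ`. -/
noncomputable def limitFilter : Filter ℂˣ :=
  Filter.comap (fun t : ℂˣ => (t : ℂ)) (𝓝[≠] (0 : ℂ))

/-- The fixed locus of a `ℂˣ`-action on `Y`. -/
def fixedLocus (Y : Type*) [MulAction ℂˣ Y] : Set Y := {y : Y | ∀ t : ℂˣ, t • y = y}

/-- The attracting correspondence of the diagonal of the fixed locus of `W`: pairs
`(w, w')` with `w ∈ W`, `w' ∈ W ∩ Fix`, and `t • w → w'` as `t → 0` (limit in `Y`). -/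
def attrCorr {Y : Type*} [TopologicalSpace Y] [MulAction ℂˣ Y] (W : Set Y) : Set (Y × Y) :=
  {p : Y × Y | p.1 ∈ W ∧ p.2 ∈ W ∩ fixedLocus Y ∧
    Tendsto (fun t : ℂˣ => t • p.1) limitFilter (𝓝 p.2)}

/-- If `Y` is Hausdorff with a continuous `ℂˣ`-action, `X ⊆ Y` is closed, and `r : Y → Y`
is a continuous equivariant retraction of `Y` onto `X`, then (with closures taken in
`Y × Y`) the closure of the attracting correspondence of `Y` intersected with
`X × (X ∩ Fix)` equals the closure of the attracting correspondence of `X`. -/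
theorem closure_attrCorr_inter
    {Y : Type*} [TopologicalSpace Y] [T2Space Y] [MulAction ℂˣ Y] [ContinuousSMul ℂˣ Y]
    {X : Set Y} (hXclosed : IsClosed X) (r : Y → Y) (hr : Continuous r)
    (hrange : ∀ y : Y, r y ∈ X) (hid : ∀ x ∈ X, r x = x)
    (hequiv : ∀ (t : ℂˣ) (y : Y), r (t • y) = t • r y) :
    closure (attrCorr (Set.univ : Set Y)) ∩ (X ×ˢ (X ∩ fixedLocus Y)) =
      closure (attrCorr X) := by
  have hFixClosed : IsClosed (fixedLocus Y) := by
    have : fixedLocus Y = ⋂ t : ℂˣ, {y : Y | t • y = y} := by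
      ext y; simp [fixedLocus, Set.mem_iInter]
    rw [this]
    exact isClosed_iInter fun t =>
      isClosed_eq ((continuous_const_smul t)) continuous_id
  apply Set.Subset.antisymm
  · -- use the retraction map R (a,b) = (r a, r b)
    intro p hp
    have hpc := hp.1
    have hp1 := hp.2.1
    set R : Y × Y → Y × Y := fun q => (r q.1, r q.2) with hR
    have hRc : Continuous R := (hr.comp continuous_fst).prodMk (hr.comp continuous_snd)
    have hmaps : Set.MapsTo R (attrCorr (Set.univ : Set Y)) (attrCorr X) := by
      rintro ⟨a, b⟩ ⟨-, ⟨-, hbfix⟩, htend⟩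
      refine ⟨hrange a, ⟨hrange b, fun t => ?_⟩, ?_⟩
      · rw [← hequiv t b, hbfix t]
      · have : Tendsto (fun t : ℂˣ => r (t • a)) limitFilter (𝓝 (r b)) :=
          (hr.tendsto b).comp htend
        simpa [hequiv] using this
    have hRp : R p = p := by
      have h1 : r p.1 = p.1 := hid p.1 hp1
      have h2 : r p.2 = p.2 := hid p.2 hp.2.2.1
      simp only [hR]
      rw [h1, h2]
    have := (hmaps.closure hRc) hpc
    rwa [hRp] at this
  · -- attrCorr X ⊆ the LHS, which is closed
    have hsub : attrCorr X ⊆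
        closure (attrCorr (Set.univ : Set Y)) ∩ (X ×ˢ (X ∩ fixedLocus Y)) := by
      rintro ⟨a, b⟩ ⟨ha, ⟨hb, hbfix⟩, htend⟩
      exact ⟨subset_closure ⟨Set.mem_univ a, ⟨Set.mem_univ b, hbfix⟩, htend⟩,
        ha, hb, hbfix⟩
    have hclosed : IsClosed
        (closure (attrCorr (Set.univ : Set Y)) ∩ (X ×ˢ (X ∩ fixedLocus Y))) :=
      isClosed_closure.inter (hXclosed.prod (hXclosed.inter hFixClosed))
    exact closure_minimal hsub hclosed
end

section
/- Let p, n, m be natural numbers, and let s : ((Fin p → ℂ) × (Fin n → ℂ)) → (Fin m → ℂ) and φ : ((Fin p → ℂ) × (Fin n → ℂ)) → ℂ be complex-differentiable everywhere. Define w : (Fin p → ℂ) × (Fin n → ℂ) × (Fin n → ℂ) × (Fin m → ℂ) → ℂ by w(y, t, k, e) = Σ_{i : Fin n} k i * t i + Σ_{j : Fin m} e j * (s (y, t)) j + φ(y, t), and w' : (Fin p → ℂ) × (Fin m → ℂ) → ℂ by w'(y, e) = Σ_{j : Fin m} e j * (s (y, 0)) j + φ(y, 0). Then for every point (y, t, k,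 e) one has fderiv ℂ w (y, t, k, e) = 0 if and only if: t = 0, fderiv ℂ w' (y, e) = 0, and for every i : Fin n, k i = −( Σ_{j} e j * ((fderiv ℂ s (y, 0)) (0, Pi.single i 1)) j + (fderiv ℂ φ (y, 0)) (0, Pi.single i 1) ). Consequently the projection (y, t, k, e) ↦ (y, e) restricts to a bijection from the critical locus {x : fderiv ℂ w x = 0} onto the critical locus {x' : fderiv ℂ w' x' = 0}. -/
/-!
Write `w (y, t, k, e) = ⟨k, t⟩ + g ((y, t), e)` with `g ((y, t), e) = ⟨e, s (y, t)⟩ + φ (y, t)`,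
so that `w' (y, e) = g ((y, 0), e)`. The `k`-derivative of `w` is `t`, so a critical point has
`t = 0`; there the `(y, e)`-derivative of `w` is that of `w'`, and the `t`-derivative
`k + ∂ₜ g ((y, 0), e)` vanishes exactly for the stated `k`. Hence `Crit w` is the graph of a
function of `(y, e)` over `Crit w'`, and the projection maps a graph bijectively onto its base.
-/

open ContinuousLinearMap

section
variable {X : Type*} [NormedAddCommGroup X] [NormedSpace ℂ X] {κ : Type*} [Fintype κ]

theorem HasFDerivAt.sum_mul_add {a b : X → κ → ℂ} {c : X → ℂ} {a' b' : X →L[ℂ] κ → ℂ}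
    {c' : X →L[ℂ] ℂ} {z : X} (ha : HasFDerivAt a a' z) (hb : HasFDerivAt b b' z)
    (hc : HasFDerivAt c c' z) :
    HasFDerivAt (fun z => ∑ j, a z j * b z j + c z)
      ((∑ j, (a z j • (proj j ∘L b') + b z j • (proj j ∘L a'))) + c') z :=
  (HasFDerivAt.fun_sum fun j _ =>
    ((hasFDerivAt_apply j _).comp z ha).mul ((hasFDerivAt_apply j _).comp z hb)).add hc

theorem ContinuousLinearMap.apply_eq_sum_mul_single [DecidableEq κ] (ℓ : (κ → ℂ) →L[ℂ] ℂ)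
    (T : κ → ℂ) : ℓ T = ∑ i, T i * ℓ (Pi.single i 1) := by
  conv_lhs => rw [← Finset.univ_sum_single T, map_sum]
  refine Finset.sum_congr rfl fun i _ => ?_
  rw [← smul_eq_mul, ← map_smul, ← Pi.single_smul', smul_eq_mul, mul_one]

theorem fderiv_sum_snd_mul_add_apply_inl {s : X → κ → ℂ} {φ : X → ℂ} {x : X}
    (hs : DifferentiableAt ℂ s x) (hφ : DifferentiableAt ℂ φ x) (e : κ → ℂ) (v : X) :
    fderiv ℂ (fun z : X × (κ → ℂ) => ∑ j, z.2 j * s z.1 j + φ z.1) (x, e) (v, 0) =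
      ∑ j, e j * fderiv ℂ s x v j + fderiv ℂ φ x v := by
  have h : HasFDerivAt (fun z : X × (κ → ℂ) => ∑ j, z.2 j * s z.1 j + φ z.1) _ (x, e) :=
    (hasFDerivAt_snd (p := (x, e))).sum_mul_add (hs.hasFDerivAt.comp (x, e) hasFDerivAt_fst)
      (hφ.hasFDerivAt.comp (x, e) hasFDerivAt_fst)
  rw [h.fderiv]
  simp

end

section
variable {E F : Type*} [NormedAddCommGroup E] [NormedSpace ℂ E] [NormedAddCommGroup F]
  [NormedSpace ℂ F] {ι : Type*} [Fintype ι]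

theorem fderiv_sum_mul_add_apply (G : (E × (ι → ℂ)) × F → ℂ) (y : E) (t k : ι → ℂ) (e : F)
    (hG : DifferentiableAt ℂ G ((y, t), e)) (v : E × (ι → ℂ) × (ι → ℂ) × F) :
    fderiv ℂ (fun x : E × (ι → ℂ) × (ι → ℂ) × F =>
        ∑ i, x.2.2.1 i * x.2.1 i + G ((x.1, x.2.1), x.2.2.2)) (y, t, k, e) v =
      ∑ i, (k i * v.2.1 i + t i * v.2.2.1 i) + fderiv ℂ G ((y, t), e) ((v.1, v.2.1), v.2.2.2) := by
  let π : E × (ι → ℂ) × (ι → ℂ) × F →L[ℂ] (E × (ι → ℂ)) × F :=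
    ((fst ℂ _ _).prod (fst ℂ _ _ ∘L snd ℂ _ _)).prod (snd ℂ _ _ ∘L snd ℂ _ _ ∘L snd ℂ _ _)
  have hk := (hasFDerivAt_id (𝕜 := ℂ) (y, t, k, e)).snd.snd.fst
  have ht := (hasFDerivAt_id (𝕜 := ℂ) (y, t, k, e)).snd.fst
  have h : HasFDerivAt (fun x : E × (ι → ℂ) × (ι → ℂ) × F =>
      ∑ i, x.2.2.1 i * x.2.1 i + G ((x.1, x.2.1), x.2.2.2)) _ (y, t, k, e) :=
    hk.sum_mul_add ht (hG.hasFDerivAt.comp (y, t, k, e) π.hasFDerivAt)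
  rw [h.fderiv]
  simp [π]

theorem fderiv_comp_zero_fiber_apply {G : (E × (ι → ℂ)) × F → ℂ} {y : E} {e : F}
    (hG : DifferentiableAt ℂ G ((y, 0), e)) (v : E × F) :
    fderiv ℂ (fun z : E × F => G ((z.1, 0), z.2)) (y, e) v =
      fderiv ℂ G ((y, 0), e) ((v.1, 0), v.2) := by
  let ι₀ : E × F →L[ℂ] (E × (ι → ℂ)) × F := (inl ℂ _ _ ∘L fst ℂ _ _).prod (snd ℂ _ _)
  have h : HasFDerivAt (fun z : E × F => G ((z.1, 0), z.2)) _ (y, e) :=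
    hG.hasFDerivAt.comp (y, e) ι₀.hasFDerivAt
  rw [h.fderiv]
  rfl

theorem fderiv_sum_mul_add_eq_zero_iff [DecidableEq ι] (G : (E × (ι → ℂ)) × F → ℂ) (y : E)
    (t k : ι → ℂ) (e : F) (hG : DifferentiableAt ℂ G ((y, t), e)) :
    fderiv ℂ (fun x : E × (ι → ℂ) × (ι → ℂ) × F =>
        ∑ i, x.2.2.1 i * x.2.1 i + G ((x.1, x.2.1), x.2.2.2)) (y, t, k, e) = 0 ↔
      t = 0 ∧ fderiv ℂ (fun z : E × F => G ((z.1, 0), z.2)) (y, e) = 0 ∧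
        ∀ i, k i = -fderiv ℂ G ((y, 0), e) ((0, Pi.single i 1), 0) := by
  simp_rw [ContinuousLinearMap.ext_iff, fderiv_sum_mul_add_apply G y t k e hG, zero_apply]
  constructor
  · intro h
    obtain rfl : t = 0 := funext fun i => by
      simpa [Pi.single_apply, Prod.mk_zero_zero] using h (0, 0, Pi.single i 1, 0)
    refine ⟨rfl, fun v => ?_, fun i => ?_⟩
    · simpa [fderiv_comp_zero_fiber_apply hG] using h (v.1, 0, 0, v.2)
    · exact eq_neg_of_add_eq_zero_left (by simpa [Pi.single_apply] using h (0, Pi.single i 1, 0, 0))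
  · rintro ⟨rfl, h', hk⟩ ⟨Y, T, K, f⟩
    set D := fderiv ℂ G ((y, 0), e)
    have hsplit : D ((Y, T), f) = D ((Y, 0), f) + D ((0, T), 0) := by
      rw [← map_add]; simp
    have hT : D ((0, T), 0) = ∑ i, T i * D ((0, Pi.single i 1), 0) :=
      (D ∘L inl ℂ _ F ∘L inr ℂ E _).apply_eq_sum_mul_single T
    rw [hsplit, ← fderiv_comp_zero_fiber_apply hG (Y, f), h', hT, zero_add,
      ← Finset.sum_add_distrib]
    exact Finset.sum_eq_zero fun i _ => by rw [hk i, Pi.zero_apply]; ring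

end

theorem Set.bijOn_graph_proj {α β γ δ : Type*} (b : β) (κ : α × δ → γ) (S : Set (α × δ)) :
    Set.BijOn (fun x : α × β × γ × δ => (x.1, x.2.2.2))
      {x | x.2.1 = b ∧ (x.1, x.2.2.2) ∈ S ∧ x.2.2.1 = κ (x.1, x.2.2.2)} S := by
  refine ⟨fun x hx => hx.2.1, ?_, fun z hz => ⟨(z.1, b, κ z, z.2), ⟨rfl, hz, rfl⟩, rfl⟩⟩
  rintro x ⟨hb, -, hκ⟩ x' ⟨hb', -, hκ'⟩ h
  obtain ⟨ha, hd⟩ := Prod.ext_iff.mp h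
  exact Prod.ext ha (Prod.ext (hb.trans hb'.symm)
    (Prod.ext (hκ.trans ((congrArg κ h).trans hκ'.symm)) hd))

/-- Local-coordinate form of the compatibility of critical loci under dimensional
reduction: for `w (y,t,k,e) = ∑ k i * t i + ∑ e j * s(y,t) j + φ(y,t)` and
`w' (y,e) = ∑ e j * s(y,0) j + φ(y,0)`, a point is critical for `w` iff `t = 0`,
`(y,e)` is critical for `w'`, and `k` is determined by the stated formula; consequently
the projection `(y,t,k,e) ↦ (y,e)` is a bijection from `Crit(w)` onto `Crit(w')`. -/
theorem crit_locus_dimensional_reduction (p n m : ℕ)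
    (s : (Fin p → ℂ) × (Fin n → ℂ) → (Fin m → ℂ))
    (φ : (Fin p → ℂ) × (Fin n → ℂ) → ℂ)
    (hs : Differentiable ℂ s) (hφ : Differentiable ℂ φ)
    (w : (Fin p → ℂ) × (Fin n → ℂ) × (Fin n → ℂ) × (Fin m → ℂ) → ℂ)
    (hw : w = fun x =>
      (∑ i : Fin n, x.2.2.1 i * x.2.1 i) +
      (∑ j : Fin m, x.2.2.2 j * s (x.1, x.2.1) j) + φ (x.1, x.2.1))
    (w' : (Fin p → ℂ) × (Fin m → ℂ) → ℂ)
    (hw' : w' = fun x => (∑ j : Fin m, x.2 j * s (x.1, 0) j) + φ (x.1, 0)) :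
    (∀ x : (Fin p → ℂ) × (Fin n → ℂ) × (Fin n → ℂ) × (Fin m → ℂ),
        fderiv ℂ w x = 0 ↔
          x.2.1 = 0 ∧ fderiv ℂ w' (x.1, x.2.2.2) = 0 ∧
            ∀ i : Fin n, x.2.2.1 i =
              -((∑ j : Fin m, x.2.2.2 j * fderiv ℂ s (x.1, 0) (0, Pi.single i 1) j) +
                fderiv ℂ φ (x.1, 0) (0, Pi.single i 1))) ∧
      Set.BijOn
        (fun x : (Fin p → ℂ) × (Fin n → ℂ) × (Fin n → ℂ) × (Fin m → ℂ) => (x.1, x.2.2.2))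
        {x | fderiv ℂ w x = 0} {x' | fderiv ℂ w' x' = 0} := by
  set G := fun z : ((Fin p → ℂ) × (Fin n → ℂ)) × (Fin m → ℂ) =>
    ∑ j, z.2 j * s z.1 j + φ z.1
  have hwG : w = fun x => ∑ i, x.2.2.1 i * x.2.1 i + G ((x.1, x.2.1), x.2.2.2) := by
    rw [hw]; funext x; exact add_assoc _ _ _
  have hcrit : ∀ x : (Fin p → ℂ) × (Fin n → ℂ) × (Fin n → ℂ) × (Fin m → ℂ),
      fderiv ℂ w x = 0 ↔
        x.2.1 = 0 ∧ fderiv ℂ w' (x.1, x.2.2.2) = 0 ∧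
          ∀ i : Fin n, x.2.2.1 i =
            -((∑ j : Fin m, x.2.2.2 j * fderiv ℂ s (x.1, 0) (0, Pi.single i 1) j) +
              fderiv ℂ φ (x.1, 0) (0, Pi.single i 1)) := by
    rintro ⟨y, t, k, e⟩
    rw [hwG, fderiv_sum_mul_add_eq_zero_iff G y t k e (by fun_prop), hw']
    simp_rw [G, fderiv_sum_snd_mul_add_apply_inl (hs _) (hφ _)]
  refine ⟨hcrit, ?_⟩
  convert Set.bijOn_graph_proj (0 : Fin n → ℂ) (fun (z : (Fin p → ℂ) × (Fin m → ℂ)) i =>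
    -((∑ j, z.2 j * fderiv ℂ s (z.1, 0) (0, Pi.single i 1) j) +
      fderiv ℂ φ (z.1, 0) (0, Pi.single i 1))) {x' | fderiv ℂ w' x' = 0} using 2
  ext x
  exact (hcrit x).trans (and_congr_right' (and_congr_right' funext_iff.symm))
end

section
/- Let ι be a finite type, n : ι → ℤ, and v : ι → ℂ. Define γ₊, γ₋ : ℂˣ → (ι → ℂ) by γ₊(t) i = (t : ℂ)^(n i) * v i and γ₋(t) i = (t : ℂ)^(−(n i)) * v i, where powers are integer powers (zpow). Then: (a) there exists w : ι → ℂ with γ₊ tending to 𝓝 w along ℱ if and only if v i = 0 for every i with n i < 0; and in that case γ₊ tends along ℱ to the point w given by w i = v i if n i = 0 and w i = 0 otherwise. (b) There exist w and w' such that γ₊ tends to 𝓝 w along ℱ and γ₋ tends to 𝓝 w' along ℱ if and only if v i = 0 for every i with n i ≠ 0. -/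
open Filter Topology

lemma limitFilter_neBot : Filter.NeBot limitFilter := by
  have h : Set.range (fun t : ℂˣ => (t : ℂ)) ∈ 𝓝[≠] (0 : ℂ) := by
    have : {x : ℂ | x ≠ 0} ⊆ Set.range (fun t : ℂˣ => (t : ℂ)) := by
      intro x hx; exact ⟨Units.mk0 x hx, rfl⟩
    exact mem_of_superset self_mem_nhdsWithin this
  exact Filter.NeBot.comap_of_range_mem (by infer_instance) h

lemma coe_tendsto : Tendsto (fun t : ℂˣ => (t : ℂ)) limitFilter (𝓝 0) :=
  (tendsto_comap.mono_right nhdsWithin_le_nhds)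

lemma zpow_tendsto {k : ℤ} (hk : 0 < k) :
    Tendsto (fun t : ℂˣ => (t : ℂ) ^ k) limitFilter (𝓝 0) := by
  have hnat : k = (k.toNat : ℤ) := (Int.toNat_of_nonneg hk.le).symm
  have : Tendsto (fun t : ℂˣ => (t : ℂ) ^ k.toNat) limitFilter (𝓝 (0 ^ k.toNat)) :=
    coe_tendsto.pow _
  rw [zero_pow (by omega)] at this
  have heq : (fun t : ℂˣ => (t : ℂ) ^ k) = fun t : ℂˣ => (t : ℂ) ^ k.toNat := by
    funext t; conv_lhs => rw [hnat, zpow_natCast]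
  rw [heq]; exact this

lemma scalar_limit {k : ℤ} {c : ℂ} (h : k < 0 → c = 0) :
    Tendsto (fun t : ℂˣ => (t : ℂ) ^ k * c) limitFilter
      (𝓝 (if k = 0 then c else 0)) := by
  by_cases hc : c = 0
  · simpa [hc] using tendsto_const_nhds
  · rcases lt_trichotomy k 0 with hk | hk | hk
    · exact absurd (h hk) hc
    · simpa [hk] using tendsto_const_nhds
    · have := (zpow_tendsto hk).mul_const c
      rw [zero_mul] at this
      simpa [hk.ne'] using this

lemma scalar_conv {k : ℤ} {c w : ℂ}
    (h : Tendsto (fun t : ℂˣ => (t : ℂ) ^ k * c) limitFilter (𝓝 w))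
    (hk : k < 0) : c = 0 := by
  have h2 : Tendsto (fun t : ℂˣ => (t : ℂ) ^ (-k)) limitFilter (𝓝 0) :=
    zpow_tendsto (by omega)
  have h3 := h.mul h2
  rw [mul_zero] at h3
  have heq : (fun t : ℂˣ => (t : ℂ) ^ k * c * (t : ℂ) ^ (-k)) = fun _ => c := by
    funext t
    have ht : (t : ℂ) ≠ 0 := t.ne_zero
    have : (t : ℂ) ^ k * (t : ℂ) ^ (-k) = 1 := by
      rw [← zpow_add₀ ht]; simp
    calc (t : ℂ) ^ k * c * (t : ℂ) ^ (-k)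
        = (t : ℂ) ^ k * (t : ℂ) ^ (-k) * c := by ring
      _ = c := by rw [this, one_mul]
  rw [heq] at h3
  have := limitFilter_neBot
  exact tendsto_const_nhds_iff.mp h3

/-- For the linear `ℂˣ`-action on `ℂ^ι` with weight `n i` on the `i`-th coordinate:
(a) `t • v` has a limit as `t → 0` iff `v i = 0` whenever `n i < 0`, in which case the
limit is `v` on the weight-`0` coordinates and `0` elsewhere; (b) both `t • v` and
`t⁻¹ • v` have limits as `t → 0` iff `v i = 0` whenever `n i ≠ 0`. -/
theorem linear_action_attracting_limits {ι : Type*} [Fintype ι] (n : ι → ℤ) (v : ι → ℂ) :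
    ((∃ w : ι → ℂ,
        Tendsto (fun t : ℂˣ => fun i => (t : ℂ) ^ (n i) * v i) limitFilter (𝓝 w)) ↔
      ∀ i, n i < 0 → v i = 0) ∧
    ((∀ i, n i < 0 → v i = 0) →
      Tendsto (fun t : ℂˣ => fun i => (t : ℂ) ^ (n i) * v i) limitFilter
        (𝓝 (fun i => if n i = 0 then v i else 0))) ∧
    ((∃ w w' : ι → ℂ,
        Tendsto (fun t : ℂˣ => fun i => (t : ℂ) ^ (n i) * v i) limitFilter (𝓝 w) ∧
        Tendsto (fun t : ℂˣ => fun i => (t : ℂ) ^ (-(n i)) * v i) limitFilter (𝓝 w')) ↔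
      ∀ i, n i ≠ 0 → v i = 0) := by
  have main : ∀ (m : ι → ℤ), (∀ i, m i < 0 → v i = 0) →
      Tendsto (fun t : ℂˣ => fun i => (t : ℂ) ^ (m i) * v i) limitFilter
        (𝓝 (fun i => if m i = 0 then v i else 0)) := by
    intro m hm
    rw [tendsto_pi_nhds]
    intro i
    exact scalar_limit (hm i)
  have conv : ∀ (m : ι → ℤ) (w : ι → ℂ),
      Tendsto (fun t : ℂˣ => fun i => (t : ℂ) ^ (m i) * v i) limitFilter (𝓝 w) →
      ∀ i, m i < 0 → v i = 0 := by
    intro m w hw i hi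
    exact scalar_conv (tendsto_pi_nhds.mp hw i) hi
  refine ⟨⟨fun ⟨w, hw⟩ => conv n w hw, fun h => ⟨_, main n h⟩⟩, main n, ?_⟩
  constructor
  · rintro ⟨w, w', hw, hw'⟩ i hi
    rcases lt_or_gt_of_ne hi with h | h
    · exact conv n w hw i h
    · exact conv (fun i => -(n i)) w' hw' i (show -(n i) < 0 by omega)
  · intro h
    exact ⟨_, _, main n (fun i hi => h i hi.ne), main (fun i => -(n i)) (fun i (hi : -(n i) < 0) => h i (by omega))⟩
end

section
/- Let ι be a finite type, θ : ι → ℝ with θ i < 0 for every i, and v : ι → ℕ. For every family of real numbers σ : (i : ι) → Fin (v i) → ℝ one has Σ_i Σ_j θ i * σ i j ≤ Real.sqrt (Σ_i (v i : ℝ) * |θ i|) * Real.sqrt (Σ_i Σ_j |θ i| * (σ i j)^2). Moreover, if σ is not identically zero, then equality holds if and only if there exists c > 0 such that σ i j = −c for all i and all j : Fin (v i). -/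
/-!
With the weights `|θ i| > 0` on the index set `Σ i, Fin (v i)`, the left-hand side is the weighted
inner product of `σ` with the constant vector `-1`, whose weighted norm is `√(∑ i, v i * |θ i|)`.
The claim is therefore Cauchy–Schwarz for this inner product, with equality exactly when `σ` lies
on the ray through `-1`. Scaling coordinates by `√w` turns the weighted inner product into the
Euclidean one, where equality in Cauchy–Schwarz is `SameRay` by strict convexity.
-/

open Finset RealInnerProductSpace

theorem real_inner_eq_norm_mul_iff_sameRay {F : Type*} [NormedAddCommGroup F]
    [InnerProductSpace ℝ F] {x y : F} : ⟪x, y⟫ = ‖x‖ * ‖y‖ ↔ SameRay ℝ x y := by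
  rw [inner_eq_norm_mul_iff_real, sameRay_iff_norm_add, norm_add_eq_iff_real]

section Weighted

variable {κ : Type*} (w : κ → ℝ)

noncomputable def sqrtWeight : (κ → ℝ) →ₗ[ℝ] EuclideanSpace ℝ κ :=
  (WithLp.linearEquiv 2 ℝ (κ → ℝ)).symm.toLinearMap ∘ₗ
    LinearMap.pi fun k => √(w k) • LinearMap.proj k

variable {w}

@[simp]
theorem sqrtWeight_apply (x : κ → ℝ) (k : κ) : sqrtWeight w x k = √(w k) * x k := rfl

theorem inner_sqrtWeight [Fintype κ] (hw : ∀ k, 0 ≤ w k) (x y : κ → ℝ) :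
    ⟪sqrtWeight w x, sqrtWeight w y⟫ = ∑ k, w k * x k * y k := by
  simp only [PiLp.inner_apply, sqrtWeight_apply, RCLike.inner_apply, conj_trivial]
  refine sum_congr rfl fun k _ => ?_
  linear_combination (x k * y k) * Real.mul_self_sqrt (hw k)

theorem norm_sqrtWeight [Fintype κ] (hw : ∀ k, 0 ≤ w k) (x : κ → ℝ) :
    ‖sqrtWeight w x‖ = √(∑ k, w k * x k ^ 2) := by
  simp only [norm_eq_sqrt_real_inner, inner_sqrtWeight hw, mul_assoc, sq]

theorem sqrtWeight_injective (hw : ∀ k, 0 < w k) : Function.Injective (sqrtWeight w) := by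
  intro x y h
  funext k
  simpa [(Real.sqrt_pos.2 (hw k)).ne'] using congrArg (· k) h

theorem sum_weight_mul_le_sqrt_mul_sqrt [Fintype κ] (hw : ∀ k, 0 ≤ w k) (x y : κ → ℝ) :
    ∑ k, w k * x k * y k ≤ √(∑ k, w k * x k ^ 2) * √(∑ k, w k * y k ^ 2) := by
  rw [← inner_sqrtWeight hw, ← norm_sqrtWeight hw, ← norm_sqrtWeight hw]
  exact real_inner_le_norm _ _

theorem sum_weight_mul_eq_sqrt_mul_sqrt_iff [Fintype κ] (hw : ∀ k, 0 < w k) (x y : κ → ℝ) :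
    ∑ k, w k * x k * y k = √(∑ k, w k * x k ^ 2) * √(∑ k, w k * y k ^ 2) ↔ SameRay ℝ x y := by
  have hw₀ k := (hw k).le
  rw [← inner_sqrtWeight hw₀, ← norm_sqrtWeight hw₀, ← norm_sqrtWeight hw₀,
    real_inner_eq_norm_mul_iff_sameRay, (sqrtWeight_injective hw).sameRay_map_iff]

end Weighted

/-- Cauchy–Schwarz bound for the Kempf–Ness numerical invariant: for negative `θ` and
any `σ`, `∑ᵢ∑ⱼ θ i * σ i j ≤ √(∑ᵢ v i * |θ i|) * √(∑ᵢ∑ⱼ |θ i| * (σ i j)²)`, and for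
nonzero `σ`, equality holds iff all entries `σ i j` equal a common negative number `-c`. -/
theorem kempfNess_cauchySchwarz {ι : Type*} [Fintype ι]
    (θ : ι → ℝ) (hθ : ∀ i, θ i < 0) (v : ι → ℕ) :
    (∀ σ : (i : ι) → Fin (v i) → ℝ,
        (∑ i, ∑ j, θ i * σ i j) ≤
          Real.sqrt (∑ i, (v i : ℝ) * |θ i|) *
            Real.sqrt (∑ i, ∑ j, |θ i| * σ i j ^ 2)) ∧
      ∀ σ : (i : ι) → Fin (v i) → ℝ, σ ≠ 0 →
        ((∑ i, ∑ j, θ i * σ i j) =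
            Real.sqrt (∑ i, (v i : ℝ) * |θ i|) *
              Real.sqrt (∑ i, ∑ j, |θ i| * σ i j ^ 2) ↔
          ∃ c : ℝ, 0 < c ∧ ∀ (i : ι) (j : Fin (v i)), σ i j = -c) := by
  let w : (Σ i, Fin (v i)) → ℝ := fun p => |θ p.1|
  have hw p : 0 < w p := abs_pos.2 (hθ p.1).ne
  have hlin σ : ∑ i, ∑ j, θ i * σ i j =
      ∑ p, w p * (-1 : (Σ i, Fin (v i)) → ℝ) p * Sigma.uncurry σ p := by
    simp [Fintype.sum_sigma, w, abs_of_neg (hθ _), Sigma.uncurry]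
  have hconst : ∑ i, (v i : ℝ) * |θ i| = ∑ p, w p * (-1 : (Σ i, Fin (v i)) → ℝ) p ^ 2 := by
    simp [Fintype.sum_sigma, w]
  have hquad σ : ∑ i, ∑ j, |θ i| * σ i j ^ 2 = ∑ p, w p * Sigma.uncurry σ p ^ 2 := by
    simp only [Fintype.sum_sigma, w, Sigma.uncurry]
  refine ⟨fun σ => ?_, fun σ hσ => ?_⟩
  · rw [hlin, hconst, hquad]
    exact sum_weight_mul_le_sqrt_mul_sqrt (fun p => (hw p).le) _ _
  · rw [hlin, hconst, hquad, sum_weight_mul_eq_sqrt_mul_sqrt_iff hw]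
    obtain ⟨i, j, hij⟩ : ∃ i j, σ i j ≠ 0 := by simpa [funext_iff] using hσ
    have hneg : (-1 : (Σ i, Fin (v i)) → ℝ) ≠ 0 := fun h => by simpa using congrFun h ⟨i, j⟩
    have hflat : Sigma.uncurry σ ≠ 0 := fun h => hij (congrFun h ⟨i, j⟩)
    rw [← exists_pos_left_iff_sameRay hneg hflat]
    simp [funext_iff, Sigma.forall, Sigma.uncurry, eq_comm]
end

section
/- Let ι be a finite type, θ : ι → ℝ with θ i < 0 for every i, and v : ι → ℕ. For a family of real numbers σ : (i : ι) → Fin (v i) → ℝ, let u i := the number of indices j : Fin (v i) with σ i j ≠ 0. Then Σ_i Σ_j θ i * σ i j ≤ Real.sqrt (Σ_i (u i : ℝ) * |θ i|) * Real.sqrt (Σ_i Σ_j |θ i| * (σ i j)^2). Moreover, if σ is not identically zero, then equality holds if and only if there exists c > 0 such that σ i j = −c for every pair (i, j) with σ i j ≠ 0. -/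
/-!
On the disjoint union of the blocks, with weights `w = |θ|`, the left-hand side is
`∑ w · 1_{supp σ} · (-σ)`, a weighted inner product of the support indicator of `σ` with `-σ`.
The weighted squared norms of these are `∑ u i |θ i|` and `∑ |θ| σ²`, so the bound is
Cauchy–Schwarz, and equality forces `-σ` to be a positive multiple of the indicator,
i.e. constant and positive on the support of `σ`.
-/

open Function RealInnerProductSpace Finset

section WeightedCauchySchwarz

variable {α : Type*} {w : α → ℝ}

noncomputable def sqrtWeighted (w : α → ℝ) : (α → ℝ) →ₗ[ℝ] EuclideanSpace ℝ α where
  toFun f := WithLp.toLp 2 fun a => √(w a) * f a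
  map_add' f g := by ext; simp [mul_add]
  map_smul' c f := by ext; simp [mul_left_comm]

@[simp]
theorem sqrtWeighted_apply (f : α → ℝ) (a : α) : sqrtWeighted w f a = √(w a) * f a := rfl

theorem sqrtWeighted_injective (hw : ∀ a, 0 < w a) : Injective (sqrtWeighted w) :=
  fun f g h => funext fun a =>
    mul_left_cancel₀ (Real.sqrt_pos.mpr (hw a)).ne' (by simpa using congrArg (· a) h)

theorem indicator_support_ne_zero {g : α → ℝ} (hg : g ≠ 0) :
    (support g).indicator (1 : α → ℝ) ≠ 0 := by
  simpa [Set.indicator_eq_zero', Set.disjoint_univ] using hg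

theorem eq_smul_indicator_support_iff {g : α → ℝ} {r : ℝ} :
    g = r • (support g).indicator 1 ↔ ∀ a, g a ≠ 0 → g a = r := by
  refine funext_iff.trans (forall_congr' fun a => ?_)
  by_cases ha : g a = 0 <;> simp [ha]

variable [Fintype α]

theorem inner_sqrtWeighted (hw : ∀ a, 0 ≤ w a) (f g : α → ℝ) :
    ⟪sqrtWeighted w f, sqrtWeighted w g⟫ = ∑ a, w a * f a * g a := by
  simp only [PiLp.inner_apply, sqrtWeighted_apply, RCLike.inner_apply, conj_trivial]
  refine sum_congr rfl fun a _ => ?_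
  linear_combination (f a * g a) * Real.mul_self_sqrt (hw a)

theorem norm_sqrtWeighted (hw : ∀ a, 0 ≤ w a) (f : α → ℝ) :
    ‖sqrtWeighted w f‖ = √(∑ a, w a * f a ^ 2) := by
  simp only [norm_eq_sqrt_real_inner, inner_sqrtWeighted hw, mul_assoc, sq]

theorem sum_weight_mul_mul_le (hw : ∀ a, 0 ≤ w a) (f g : α → ℝ) :
    ∑ a, w a * f a * g a ≤ √(∑ a, w a * f a ^ 2) * √(∑ a, w a * g a ^ 2) := by
  rw [← inner_sqrtWeighted hw, ← norm_sqrtWeighted hw, ← norm_sqrtWeighted hw]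
  exact real_inner_le_norm _ _

theorem sum_weight_mul_mul_eq_iff (hw : ∀ a, 0 < w a) {f g : α → ℝ} (hf : f ≠ 0) (hg : g ≠ 0) :
    ∑ a, w a * f a * g a = √(∑ a, w a * f a ^ 2) * √(∑ a, w a * g a ^ 2) ↔
      ∃ r : ℝ, 0 < r ∧ g = r • f := by
  have hw₀ : ∀ a, 0 ≤ w a := fun a => (hw a).le
  have hinj := sqrtWeighted_injective hw
  have hf' : sqrtWeighted w f ≠ 0 := (map_ne_zero_iff _ hinj).mpr hf
  have hg' : sqrtWeighted w g ≠ 0 := (map_ne_zero_iff _ hinj).mpr hg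
  rw [← inner_sqrtWeighted hw₀, ← norm_sqrtWeighted hw₀, ← norm_sqrtWeighted hw₀,
    ← div_eq_one_iff_eq (by positivity), real_inner_div_norm_mul_norm_eq_one_iff,
    and_iff_right hf']
  simp only [← map_smul, hinj.eq_iff]

theorem sum_mul_indicator_support_mul (g : α → ℝ) :
    ∑ a, w a * (support g).indicator 1 a * g a = ∑ a, w a * g a := by
  refine sum_congr rfl fun a _ => ?_
  by_cases ha : g a = 0 <;> simp [ha]

theorem sum_mul_indicator_support_sq (g : α → ℝ) :
    ∑ a, w a * (support g).indicator 1 a ^ 2 = ∑ a with g a ≠ 0, w a := by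
  rw [sum_filter]
  refine sum_congr rfl fun a _ => ?_
  by_cases ha : g a = 0 <;> simp [ha]

theorem sum_weight_mul_le_sqrt_sum_support (hw : ∀ a, 0 ≤ w a) (g : α → ℝ) :
    ∑ a, w a * g a ≤ √(∑ a with g a ≠ 0, w a) * √(∑ a, w a * g a ^ 2) := by
  simpa only [sum_mul_indicator_support_mul, sum_mul_indicator_support_sq] using
    sum_weight_mul_mul_le hw ((support g).indicator 1) g

theorem sum_weight_mul_eq_sqrt_sum_support_iff (hw : ∀ a, 0 < w a) {g : α → ℝ} (hg : g ≠ 0) :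
    ∑ a, w a * g a = √(∑ a with g a ≠ 0, w a) * √(∑ a, w a * g a ^ 2) ↔
      ∃ c : ℝ, 0 < c ∧ ∀ a, g a ≠ 0 → g a = c := by
  simpa only [sum_mul_indicator_support_mul, sum_mul_indicator_support_sq,
    eq_smul_indicator_support_iff] using
    sum_weight_mul_mul_eq_iff hw (indicator_support_ne_zero hg) hg

end WeightedCauchySchwarz

/-- Cauchy–Schwarz bound for the Kempf–Ness numerical invariant with prescribed support:
with `u i` the number of nonzero entries of `σ` in the `i`-th block, one has
`∑ᵢ∑ⱼ θ i * σ i j ≤ √(∑ᵢ u i * |θ i|) * √(∑ᵢ∑ⱼ |θ i| * (σ i j)²)`, and for nonzero `σ`,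
equality holds iff all nonzero entries `σ i j` equal a common negative number `-c`. -/
theorem kempfNess_cauchySchwarz_support {ι : Type*} [Fintype ι]
    (θ : ι → ℝ) (hθ : ∀ i, θ i < 0) (v : ι → ℕ)
    (σ : (i : ι) → Fin (v i) → ℝ)
    (u : ι → ℕ) (hu : ∀ i, u i = Nat.card {j : Fin (v i) // σ i j ≠ 0}) :
    ((∑ i, ∑ j, θ i * σ i j) ≤
        Real.sqrt (∑ i, (u i : ℝ) * |θ i|) *
          Real.sqrt (∑ i, ∑ j, |θ i| * σ i j ^ 2)) ∧
      (σ ≠ 0 →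
        ((∑ i, ∑ j, θ i * σ i j) =
            Real.sqrt (∑ i, (u i : ℝ) * |θ i|) *
              Real.sqrt (∑ i, ∑ j, |θ i| * σ i j ^ 2) ↔
          ∃ c : ℝ, 0 < c ∧ ∀ (i : ι) (j : Fin (v i)), σ i j ≠ 0 → σ i j = -c)) := by
  set w : (Σ i, Fin (v i)) → ℝ := fun s => |θ s.1|
  set g : (Σ i, Fin (v i)) → ℝ := fun s => -σ s.1 s.2
  have hw : ∀ s, 0 < w s := fun s => abs_pos.mpr (hθ s.1).ne
  have hlin : ∑ i, ∑ j, θ i * σ i j = ∑ s, w s * g s := by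
    rw [Fintype.sum_sigma]
    refine sum_congr rfl fun i _ => sum_congr rfl fun j _ => ?_
    simp only [w, g, abs_of_neg (hθ i)]
    ring
  have hquad : ∑ i, ∑ j, |θ i| * σ i j ^ 2 = ∑ s, w s * g s ^ 2 := by
    simp only [Fintype.sum_sigma, w, g, neg_sq]
  have hsupp : ∑ i, (u i : ℝ) * |θ i| = ∑ s with g s ≠ 0, w s := by
    rw [sum_filter, Fintype.sum_sigma]
    refine sum_congr rfl fun i _ => ?_
    simp only [w, g, neg_ne_zero, ← sum_filter, sum_const, nsmul_eq_mul, hu i,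
      Nat.card_eq_fintype_card, Fintype.card_subtype]
  have hσg : σ ≠ 0 ↔ g ≠ 0 := by
    simp only [ne_eq, funext_iff, Sigma.forall, g, Pi.zero_apply, neg_eq_zero]
  rw [hlin, hquad, hsupp, hσg]
  refine ⟨sum_weight_mul_le_sqrt_sum_support (fun s => (hw s).le) g, fun hg => ?_⟩
  rw [sum_weight_mul_eq_sqrt_sum_support_iff hw hg]
  simp only [g, Sigma.forall, neg_ne_zero, neg_eq_iff_eq_neg]
end

section
/- Let r be a natural number and U ⊆ (Fin r → ℝ) a nonempty open set. Let f, g ∈ MvPolynomial (Fin r) ℝ, set D := g.totalDegree, and assume that for every σ ∈ U the evaluation at σ of the degree-D homogeneous component of g is nonzero. For σ : Fin r → ℝ let f_σ ∈ Polynomial ℝ denote the univariate polynomial obtained from f by the substitution X_i ↦ C (σ i) * X (i.e. f_σ = aeval (fun i => C (σ i) * X) f), and similarly g_σ. Then f.totalDegree < g.totalDegree if and only if for every σ ∈ U one has (f_σ).natDegree < (g_σ).natDegree. -/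
open MvPolynomial Polynomial

private lemma restrict_monomial' (r : ℕ) (σ : Fin r → ℝ) (m : Fin r →₀ ℕ) (c : ℝ) :
    (MvPolynomial.aeval (fun i => Polynomial.C (σ i) * Polynomial.X) (monomial m c) : Polynomial ℝ)
      = Polynomial.C (c * ∏ i ∈ m.support, σ i ^ m i) * Polynomial.X ^ (m.sum fun _ e => e) := by
  rw [MvPolynomial.aeval_monomial]
  simp only [Finsupp.prod, mul_pow, ← Polynomial.C_pow, Finset.prod_mul_distrib,
    Finset.prod_pow_eq_pow_sum, Finsupp.sum]
  rw [Polynomial.algebraMap_eq]; push_cast [Polynomial.C_mul, map_prod]; ring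

private lemma coeff_restrict' (r : ℕ) (σ : Fin r → ℝ) (h : MvPolynomial (Fin r) ℝ) (d : ℕ) :
    (MvPolynomial.aeval (fun i => Polynomial.C (σ i) * Polynomial.X) h : Polynomial ℝ).coeff d
      = MvPolynomial.eval σ (MvPolynomial.homogeneousComponent d h) := by
  conv_lhs => rw [h.as_sum]
  rw [map_sum, Polynomial.finset_sum_coeff, homogeneousComponent_apply, Finset.sum_filter,
    map_sum]
  refine Finset.sum_congr rfl fun m hm => ?_
  rw [restrict_monomial', Polynomial.coeff_C_mul, Polynomial.coeff_X_pow]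
  have : m.degree = m.sum fun _ e => e := rfl
  by_cases hd : m.degree = d
  · rw [if_pos hd, if_pos (by rw [← this, hd]), MvPolynomial.eval_monomial]
    simp [Finsupp.prod]
  · rw [if_neg hd, if_neg (fun hc => hd (by rw [this, ← hc])), mul_zero, map_zero]

private lemma natDegree_restrict_le' (r : ℕ) (σ : Fin r → ℝ) (h : MvPolynomial (Fin r) ℝ) :
    (MvPolynomial.aeval (fun i => Polynomial.C (σ i) * Polynomial.X) h : Polynomial ℝ).natDegree
      ≤ h.totalDegree := by
  apply Polynomial.natDegree_le_iff_coeff_eq_zero.2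
  intro d hd
  rw [coeff_restrict', homogeneousComponent_eq_zero _ _ hd, map_zero]

private lemma eq_zero_of_eval_zero_on_open (r : ℕ) (U : Set (Fin r → ℝ)) (hUne : U.Nonempty)
    (hUopen : IsOpen U) (p : MvPolynomial (Fin r) ℝ)
    (h : ∀ σ ∈ U, MvPolynomial.eval σ p = 0) : p = 0 := by
  obtain ⟨σ0, hσ0⟩ := hUne
  have han : AnalyticOnNhd ℝ (fun x : Fin r → ℝ => MvPolynomial.eval x p) Set.univ := by
    simpa using AnalyticOnNhd.eval_continuousLinearMap
      (ContinuousLinearMap.id ℝ (Fin r → ℝ)) p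
  have hz : (fun x : Fin r → ℝ => MvPolynomial.eval x p) =ᶠ[nhds σ0] 0 := by
    filter_upwards [hUopen.mem_nhds hσ0] with x hx using h x hx
  have := han.eqOn_zero_of_preconnected_of_eventuallyEq_zero isPreconnected_univ
    (Set.mem_univ σ0) hz
  exact MvPolynomial.funext fun x => by simpa using this (Set.mem_univ x)

/-- Comparison of total degrees via one-parameter restrictions: if the leading form
(the degree-`D` homogeneous component, `D = g.totalDegree`) of `g` is nonvanishing on a
nonempty open set `U ⊆ ℝ^r`, then `f.totalDegree < g.totalDegree` iff for every `σ ∈ U`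
the univariate restriction `f_σ(t) = f(t·σ)` has degree strictly smaller than that of
`g_σ`. -/
theorem totalDegree_lt_iff_restriction_natDegree_lt (r : ℕ)
    (U : Set (Fin r → ℝ)) (hUne : U.Nonempty) (hUopen : IsOpen U)
    (f g : MvPolynomial (Fin r) ℝ)
    (hg : ∀ σ ∈ U,
      MvPolynomial.eval σ (MvPolynomial.homogeneousComponent g.totalDegree g) ≠ 0) :
    f.totalDegree < g.totalDegree ↔
      ∀ σ ∈ U,
        (MvPolynomial.aeval (fun i => Polynomial.C (σ i) * Polynomial.X) f :
            Polynomial ℝ).natDegree <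
          (MvPolynomial.aeval (fun i => Polynomial.C (σ i) * Polynomial.X) g :
            Polynomial ℝ).natDegree := by
  have hgdeg : ∀ σ ∈ U,
      (MvPolynomial.aeval (fun i => Polynomial.C (σ i) * Polynomial.X) g :
        Polynomial ℝ).natDegree = g.totalDegree := fun σ hσ =>
    le_antisymm (natDegree_restrict_le' r σ g)
      (Polynomial.le_natDegree_of_ne_zero (by rw [coeff_restrict']; exact hg σ hσ))
  constructor
  · intro hlt σ hσ
    calc (MvPolynomial.aeval (fun i => Polynomial.C (σ i) * Polynomial.X) f :
          Polynomial ℝ).natDegree ≤ f.totalDegree := natDegree_restrict_le' r σ f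
      _ < g.totalDegree := hlt
      _ = _ := (hgdeg σ hσ).symm
  · intro H
    by_contra hge
    push_neg at hge
    -- g.totalDegree ≤ f.totalDegree
    obtain ⟨σ0, hσ0⟩ := hUne
    have h0 := H σ0 hσ0
    rw [hgdeg σ0 hσ0] at h0
    have hDpos : 0 < g.totalDegree := lt_of_le_of_lt (Nat.zero_le _) h0
    have hfne : f ≠ 0 := by
      intro hf
      rw [hf] at hge
      simp [MvPolynomial.totalDegree_zero] at hge
      omega
    have hcomp : MvPolynomial.homogeneousComponent f.totalDegree f ≠ 0 := by
      obtain ⟨m, hm, hdeg⟩ : ∃ m ∈ f.support, (m.sum fun _ e => e) = f.totalDegree := by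
        obtain ⟨m, hm, hdeg⟩ := Finset.exists_mem_eq_sup f.support
          (MvPolynomial.support_nonempty.2 hfne) (fun m => m.sum fun _ e => e)
        exact ⟨m, hm, hdeg.symm⟩
      intro hz
      have := MvPolynomial.coeff_homogeneousComponent (φ := f) f.totalDegree m
      rw [hz, if_pos (show m.degree = f.totalDegree from hdeg)] at this
      exact (MvPolynomial.mem_support_iff.1 hm) (by simpa using this.symm)
    apply hcomp
    apply eq_zero_of_eval_zero_on_open r U ⟨σ0, hσ0⟩ hUopen
    intro σ hσ
    rw [← coeff_restrict']
    apply Polynomial.coeff_eq_zero_of_natDegree_lt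
    calc (MvPolynomial.aeval (fun i => Polynomial.C (σ i) * Polynomial.X) f :
          Polynomial ℝ).natDegree
        < g.totalDegree := by rw [← hgdeg σ hσ]; exact H σ hσ
      _ ≤ f.totalDegree := hge
end

section
/- Let k be a field, R a nontrivial commutative k-algebra, M an R-module, r a natural number, and P := MvPolynomial (Fin r) R. Let e ∈ P, set d := e.totalDegree, and assume that the degree-d homogeneous component of e equals MvPolynomial.map (algebraMap k R) q for some nonzero q ∈ MvPolynomial (Fin r) k. Consider the base change N := P ⊗[R] M with its natural P-module structure, and for δ ∈ ℕ let F δ ⊆ N denote the image in N of (the submodule of polynomials of total degree ≤ δ) ⊗[R] M. Then: (1) scalar multiplication by e on N is injective; (2) e • (F δ) ⊆ F (δ + d) for every δ; and (3) if β ∈ F δ and e • β ∈ F (δ + d − 1), then β ∈ F (δ − 1) when δ ≥ 1, and β = 0 when δ = 0 and d ≥ 1. -/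
/-!
Identify `P ⊗[R] M` with `M`-valued coefficient functions on monomials, on which `e` acts by
convolution. Since the deg-lex leading monomial of `e` has total degree `d`, the deg-lex leading
coefficient of `e` is a coefficient of the top form, i.e. the image of a nonzero element of `k`,
hence a unit. At the sum of the deg-lex leading monomials of `e` and of a nonzero `β`, only this
pair contributes to the coefficient of `e • β`, which is therefore a unit times a nonzero element.
So `e` raises the exact total degree of every nonzero `β` by `d`, and all three claims follow.
-/

open scoped TensorProduct

namespace MvPolynomial

open Finsupp MonomialOrder

variable {σ R M : Type*} [CommSemiring R] [AddCommMonoid M] [Module R M]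

open Classical in
noncomputable def scalarRTensor : MvPolynomial σ R ⊗[R] M ≃ₗ[R] (σ →₀ ℕ) →₀ M :=
  (LinearEquiv.rTensor M (AddMonoidAlgebra.coeffLinearEquiv R)).trans
    (TensorProduct.finsuppScalarLeft R M (σ →₀ ℕ))

@[simp]
lemma scalarRTensor_tmul_apply (p : MvPolynomial σ R) (n : M) (m : σ →₀ ℕ) :
    scalarRTensor (p ⊗ₜ[R] n) m = coeff m p • n := by
  simp [scalarRTensor, coeff]

lemma scalarRTensor_symm_single (m : σ →₀ ℕ) (n : M) :
    scalarRTensor.symm (single m n) = monomial m (1 : R) ⊗ₜ[R] n := by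
  simp [scalarRTensor, ← single_eq_monomial]

lemma scalarRTensor_smul_apply [DecidableEq σ] (e : MvPolynomial σ R)
    (β : MvPolynomial σ R ⊗[R] M) (m : σ →₀ ℕ) :
    scalarRTensor (e • β) m =
      ∑ x ∈ Finset.HasAntidiagonal.antidiagonal m, coeff x.1 e • scalarRTensor β x.2 := by
  induction β using TensorProduct.induction_on with
  | zero => simp
  | tmul p n =>
    simp only [TensorProduct.smul_tmul', smul_eq_mul, scalarRTensor_tmul_apply, coeff_mul,
      Finset.sum_smul, mul_smul]
  | add x y hx hy =>
    simp only [smul_add, map_add, Finsupp.add_apply, hx, hy, Finset.sum_add_distrib]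

noncomputable def tensorTotalDegree (β : MvPolynomial σ R ⊗[R] M) : ℕ :=
  (scalarRTensor β).support.sup Finsupp.degree

lemma tensorTotalDegree_le_iff {β : MvPolynomial σ R ⊗[R] M} {δ : ℕ} :
    tensorTotalDegree β ≤ δ ↔ ∀ m, δ < Finsupp.degree m → scalarRTensor β m = 0 := by
  simp only [tensorTotalDegree, Finset.sup_le_iff, Finsupp.mem_support_iff]
  exact forall_congr' fun m ↦ by rw [← not_imp_not, not_le, not_not]

@[simp]
lemma tensorTotalDegree_zero : tensorTotalDegree (0 : MvPolynomial σ R ⊗[R] M) = 0 := by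
  simp [tensorTotalDegree]

lemma mem_range_map_restrictTotalDegree_iff {δ : ℕ} {β : MvPolynomial σ R ⊗[R] M} :
    β ∈ LinearMap.range
        (TensorProduct.map (restrictTotalDegree σ R δ).subtype (LinearMap.id : M →ₗ[R] M)) ↔
      tensorTotalDegree β ≤ δ := by
  constructor
  · rintro ⟨t, rfl⟩
    induction t using TensorProduct.induction_on with
    | zero => simp
    | tmul p n =>
      rw [tensorTotalDegree_le_iff]
      intro m hm
      have hp := (mem_restrictTotalDegree σ δ p.1).mp p.2
      simp [coeff_eq_zero_of_totalDegree_lt (hp.trans_lt hm)]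
    | add x y hx hy =>
      rw [tensorTotalDegree_le_iff] at hx hy ⊢
      intro m hm
      rw [map_add, map_add, Finsupp.add_apply, hx m hm, hy m hm, add_zero]
  · intro h
    rw [← scalarRTensor.symm_apply_apply β, ← (scalarRTensor β).sum_single, map_finsuppSum]
    refine Submodule.finsuppSum_mem _ _ _ _ fun m hm ↦
      ⟨⟨monomial m 1, ?_⟩ ⊗ₜ scalarRTensor β m, ?_⟩
    · rw [mem_restrictTotalDegree]
      exact (totalDegree_monomial_le m 1).trans
        ((Finset.le_sup (f := Finsupp.degree) (Finsupp.mem_support_iff.mpr hm)).trans h)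
    · rw [scalarRTensor_symm_single]
      rfl

lemma tensorTotalDegree_smul_le (e : MvPolynomial σ R) (β : MvPolynomial σ R ⊗[R] M) :
    tensorTotalDegree (e • β) ≤ e.totalDegree + tensorTotalDegree β := by
  classical
  rw [tensorTotalDegree_le_iff]
  intro m hm
  rw [scalarRTensor_smul_apply]
  refine Finset.sum_eq_zero fun x hx ↦ ?_
  have hdeg : Finsupp.degree x.1 + Finsupp.degree x.2 = Finsupp.degree m := by
    rw [← map_add, Finset.HasAntidiagonal.mem_antidiagonal.mp hx]
  by_cases h1 : e.totalDegree < Finsupp.degree x.1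
  · rw [coeff_eq_zero_of_totalDegree_lt h1, zero_smul]
  · rw [tensorTotalDegree_le_iff.mp le_rfl x.2 (by omega), smul_zero]

lemma scalarRTensor_smul_add_of_degree_le (o : MonomialOrder σ) {e : MvPolynomial σ R}
    {β : MvPolynomial σ R ⊗[R] M} {a b : σ →₀ ℕ} (ha : o.degree e ≼[o] a)
    (hb : ∀ ν ∈ (scalarRTensor β).support, ν ≼[o] b) :
    scalarRTensor (e • β) (a + b) = coeff a e • scalarRTensor β b := by
  classical
  rw [scalarRTensor_smul_apply, Finset.sum_eq_single (a, b)]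
  · rintro ⟨c, c'⟩ hcc hne
    by_cases hc : o.degree e ≺[o] c
    · rw [o.coeff_eq_zero_of_lt hc, zero_smul]
    by_contra hz
    have hc' : c' ≼[o] b := hb c' (Finsupp.mem_support_iff.mpr (right_ne_zero_of_smul hz))
    have hsum : o.toSyn c + o.toSyn c' = o.toSyn a + o.toSyn b := by
      rw [← map_add, ← map_add, Finset.HasAntidiagonal.mem_antidiagonal.mp hcc]
    obtain ⟨h1, h2⟩ := (add_eq_add_iff_eq_and_eq ((not_lt.mp hc).trans ha) hc').mp hsum
    exact hne (Prod.ext (o.toSyn.injective h1) (o.toSyn.injective h2))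
  · simp

section DegLex

variable [LinearOrder σ] [WellFoundedGT σ]

lemma isUnit_degLex_leadingCoeff_of_homogeneousComponent_eq_map {k : Type*} [Field k]
    [Algebra k R] [Nontrivial R] {e : MvPolynomial σ R} {q : MvPolynomial σ k} (hq : q ≠ 0)
    (htop : homogeneousComponent e.totalDegree e = map (algebraMap k R) q) :
    IsUnit (degLex.leadingCoeff e) := by
  have he : e ≠ 0 := by
    rintro rfl
    exact hq (map_injective _ (algebraMap k R).injective (by simpa using htop.symm))
  have hlead : degLex.leadingCoeff e = algebraMap k R (coeff (degLex.degree e) q) := by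
    rw [MonomialOrder.leadingCoeff, ← coeff_map, ← htop, coeff_homogeneousComponent,
      if_pos degree_degLexDegree]
  rw [hlead]
  refine (isUnit_iff_ne_zero.mpr fun h ↦ ?_).map _
  exact degLex.leadingCoeff_ne_zero_iff.mpr he (by rw [hlead, h, map_zero])

lemma exists_degLex_max_support {β : MvPolynomial σ R ⊗[R] M} (hβ : β ≠ 0) :
    ∃ μ ∈ (scalarRTensor β).support, Finsupp.degree μ = tensorTotalDegree β ∧
      ∀ ν ∈ (scalarRTensor β).support, ν ≼[degLex] μ := by
  have hne : (scalarRTensor β).support.Nonempty := by simpa using hβ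
  obtain ⟨μ, hμ, hmax⟩ := (scalarRTensor β).support.exists_max_image degLex.toSyn hne
  refine ⟨μ, hμ, le_antisymm (Finset.le_sup hμ) (Finset.sup_le fun ν hν ↦ ?_), hmax⟩
  exact DegLex.monotone_degree (hmax ν hν)

variable {e : MvPolynomial σ R} {β : MvPolynomial σ R ⊗[R] M}

lemma exists_scalarRTensor_smul_ne_zero_of_isUnit_degLex_leadingCoeff
    (he : IsUnit (degLex.leadingCoeff e)) (hβ : β ≠ 0) :
    ∃ m, Finsupp.degree m = e.totalDegree + tensorTotalDegree β ∧
      scalarRTensor (e • β) m ≠ 0 := by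
  obtain ⟨μ, hμ, hdeg, hmax⟩ := exists_degLex_max_support hβ
  refine ⟨degLex.degree e + μ, by rw [map_add, degree_degLexDegree, hdeg], ?_⟩
  rw [scalarRTensor_smul_add_of_degree_le degLex le_rfl hmax, ← MonomialOrder.leadingCoeff,
    he.smul_eq_zero.ne]
  exact Finsupp.mem_support_iff.mp hμ

theorem smul_ne_zero_of_isUnit_degLex_leadingCoeff (he : IsUnit (degLex.leadingCoeff e))
    (hβ : β ≠ 0) : e • β ≠ 0 := by
  obtain ⟨m, -, hm⟩ := exists_scalarRTensor_smul_ne_zero_of_isUnit_degLex_leadingCoeff he hβ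
  rintro h
  simp [h] at hm

theorem tensorTotalDegree_smul_of_isUnit_degLex_leadingCoeff
    (he : IsUnit (degLex.leadingCoeff e)) (hβ : β ≠ 0) :
    tensorTotalDegree (e • β) = e.totalDegree + tensorTotalDegree β := by
  obtain ⟨m, hdeg, hm⟩ := exists_scalarRTensor_smul_ne_zero_of_isUnit_degLex_leadingCoeff he hβ
  exact le_antisymm (tensorTotalDegree_smul_le e β)
    (hdeg ▸ Finset.le_sup (Finsupp.mem_support_iff.mpr hm))

end DegLex

end MvPolynomial

open MvPolynomial

/-- Multiplication by a polynomial whose leading form comes from a nonzero polynomial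
over a field: on `N = P ⊗[R] M` (with `P = MvPolynomial (Fin r) R` and its natural
`P`-module structure), scalar multiplication by `e` is injective, maps the total-degree
filtration `F δ` into `F (δ + d)` where `d = e.totalDegree`, and raises degrees by
exactly `d`: if `β ∈ F δ` and `e • β ∈ F (δ + d - 1)` then `β ∈ F (δ - 1)` when
`δ ≥ 1`, and `β = 0` when `δ = 0` and `d ≥ 1`. -/
theorem euler_class_multiplication_filtration
    (k R M : Type*) [Field k] [CommRing R] [Algebra k R] [Nontrivial R]
    [AddCommGroup M] [Module R M] (r : ℕ)
    (e : MvPolynomial (Fin r) R) (d : ℕ) (hd : d = e.totalDegree)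
    (q : MvPolynomial (Fin r) k) (hq : q ≠ 0)
    (htop : MvPolynomial.homogeneousComponent d e = MvPolynomial.map (algebraMap k R) q)
    (F : ℕ → Submodule R (MvPolynomial (Fin r) R ⊗[R] M))
    (hF : ∀ δ : ℕ, F δ = LinearMap.range
      (TensorProduct.map (MvPolynomial.restrictTotalDegree (Fin r) R δ).subtype
        (LinearMap.id : M →ₗ[R] M))) :
    Function.Injective (fun β : MvPolynomial (Fin r) R ⊗[R] M => e • β) ∧
      (∀ δ : ℕ, ∀ β ∈ F δ, e • β ∈ F (δ + d)) ∧
      (∀ δ : ℕ, ∀ β ∈ F δ, e • β ∈ F (δ + d - 1) →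
        (1 ≤ δ → β ∈ F (δ - 1)) ∧ (δ = 0 → 1 ≤ d → β = 0)) := by
  subst hd
  have he := isUnit_degLex_leadingCoeff_of_homogeneousComponent_eq_map hq htop
  simp only [hF, mem_range_map_restrictTotalDegree_iff]
  refine ⟨?_, fun δ β hβ ↦ ?_, fun δ β hβ hmul ↦ ?_⟩
  · intro β₁ β₂ h
    by_contra hne
    exact smul_ne_zero_of_isUnit_degLex_leadingCoeff he (sub_ne_zero.mpr hne)
      (by simpa [smul_sub, sub_eq_zero] using h)
  · exact (tensorTotalDegree_smul_le e β).trans (by omega)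
  · rcases eq_or_ne β 0 with rfl | hβ
    · simp
    have hdeg := tensorTotalDegree_smul_of_isUnit_degLex_leadingCoeff he hβ
    exact ⟨fun _ ↦ by omega, fun _ _ ↦ (by omega : False).elim⟩
end

section
/- Let R be a commutative ring, r a natural number, Λ := Fin r → ℤ, and A := AddMonoidAlgebra R Λ (Laurent polynomials in r variables over R). For f ∈ A let N(f) denote the convex hull over ℝ of the image of the (finite) support of f under the coercion (Fin r → ℤ) → (Fin r → ℝ). Let e, β ∈ A with e ≠ 0 and β ≠ 0, and assume that for every λ in the support of e whose image in Fin r → ℝ is an extreme point of N(e), the coefficient of e at λ is a non-zero-divisor in R. Then e * β ≠ 0, and N(e * β) = N(e) + N(β), where + denotes the Minkowski (pointwise) sum of subsets of Fin r → ℝ. -/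
/-!
Every exponent of `e * β` is a sum of exponents of `e` and `β`, so `N(e * β) ⊆ N(e) + N(β)`.
Conversely, a vertex of the polytope `N(e) + N(β)` is `λ + μ` for a unique pair of
exponents, and `λ` is then a vertex of `N(e)`; so the coefficient of `e * β` there is the single
product `e_λ β_μ`, which is nonzero because `e_λ` is a non-zero-divisor. Hence `N(e * β)`
contains every vertex of `N(e) + N(β)` and, by Krein–Milman, all of it.
-/

open Pointwise

/-- The Newton polytope of a Laurent polynomial `f` in `r` variables: the convex hull in
`ℝ^r` of the (lattice) exponents in the support of `f`. -/
noncomputable def newtonPolytope {R : Type*} [CommRing R] {r : ℕ}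
    (f : AddMonoidAlgebra R (Fin r → ℤ)) : Set (Fin r → ℝ) :=
  convexHull ℝ ((fun (m : Fin r → ℤ) (i : Fin r) => (m i : ℝ)) '' (f.coeff.support : Set (Fin r → ℤ)))

section ExtremePoints

variable {𝕜 E : Type*} [Field 𝕜] [LinearOrder 𝕜] [IsStrictOrderedRing 𝕜]
  [AddCommGroup E] [Module 𝕜 E] {A B : Set E} {a a' b b' : E}

theorem eq_and_eq_of_add_eq_of_mem_extremePoints_add (ha : a ∈ A) (ha' : a' ∈ A) (hb : b ∈ B)
    (hb' : b' ∈ B) (hext : a + b ∈ Set.extremePoints 𝕜 (A + B)) (h : a' + b' = a + b) :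
    a' = a ∧ b' = b := by
  have : Invertible (2 : 𝕜) := invertibleOfNonzero two_ne_zero
  have hmid : a + b ∈ openSegment 𝕜 (a' + b) (a + b') := by
    have hleft : a' + b = a + b - (a - a') := by abel
    have hright : a + b' = a + b + (a - a') := by rw [eq_sub_of_add_eq' h]; abel
    rw [hleft, hright]
    exact mem_openSegment_sub_add (a + b) (a - a')
  obtain ⟨h₁, h₂⟩ := (mem_extremePoints.1 hext).2 _ (Set.add_mem_add ha' hb) _
    (Set.add_mem_add ha hb') hmid
  exact ⟨add_right_cancel h₁, add_left_cancel h₂⟩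

theorem mem_extremePoints_of_add_mem_extremePoints_add (ha : a ∈ A) (hb : b ∈ B)
    (hext : a + b ∈ Set.extremePoints 𝕜 (A + B)) : a ∈ Set.extremePoints 𝕜 A := by
  refine ⟨ha, fun x₁ hx₁ x₂ hx₂ hseg => ?_⟩
  have hseg' : a + b ∈ openSegment 𝕜 (x₁ + b) (x₂ + b) := by
    simpa only [add_comm _ b] using (mem_openSegment_translate 𝕜 b).2 hseg
  exact add_right_cancel (hext.2 (Set.add_mem_add hx₁ hb) (Set.add_mem_add hx₂ hb) hseg')

end ExtremePoints

theorem convexHull_eq_of_extremePoints_subset {E : Type*} [AddCommGroup E] [Module ℝ E]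
    [TopologicalSpace E] [T2Space E] [IsTopologicalAddGroup E] [ContinuousSMul ℝ E]
    [LocallyConvexSpace ℝ E] {S T : Set E} (hS : S.Finite) (hTS : T ⊆ S)
    (hext : Set.extremePoints ℝ (convexHull ℝ S) ⊆ T) :
    convexHull ℝ T = convexHull ℝ S := by
  refine (convexHull_mono hTS).antisymm ?_
  calc convexHull ℝ S
      = closure (convexHull ℝ (Set.extremePoints ℝ (convexHull ℝ S))) :=
        (closure_convexHull_extremePoints (hS.isCompact_convexHull ℝ)
          (convex_convexHull ℝ S)).symm
    _ ⊆ closure (convexHull ℝ T) := closure_mono (convexHull_mono hext)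
    _ = convexHull ℝ T := ((hS.subset hTS).isClosed_convexHull ℝ).closure_eq

section Support

variable {R M E : Type*} [Semiring R] [AddZeroClass M] [AddCommGroup E]
  (φ : M →+ E)

theorem image_support_mul_subset (f g : AddMonoidAlgebra R M) :
    φ '' ((f * g).coeff.support : Set M) ⊆ φ '' f.coeff.support + φ '' g.coeff.support := by
  classical
  rw [← Set.image_add, ← Finset.coe_add]
  exact Set.image_mono (AddMonoidAlgebra.support_coeff_mul_subset f g)

variable {𝕜 : Type*} [Field 𝕜] [LinearOrder 𝕜] [IsStrictOrderedRing 𝕜] [Module 𝕜 E]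

theorem uniqueAdd_of_add_mem_extremePoints (hφ : Function.Injective φ) {A B : Finset M}
    {a b : M} (ha : a ∈ A) (hb : b ∈ B)
    (hext : φ a + φ b ∈
      Set.extremePoints 𝕜 (convexHull 𝕜 (φ '' A) + convexHull 𝕜 (φ '' B))) :
    UniqueAdd A B a b := by
  intro a' b' ha' hb' h
  have hmem {S : Finset M} {x : M} (hx : x ∈ S) : φ x ∈ convexHull 𝕜 (φ '' S) :=
    subset_convexHull 𝕜 _ ⟨x, hx, rfl⟩
  obtain ⟨h₁, h₂⟩ := eq_and_eq_of_add_eq_of_mem_extremePoints_add (hmem ha) (hmem ha')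
    (hmem hb) (hmem hb') hext (by rw [← map_add, ← map_add, h])
  exact ⟨hφ h₁, hφ h₂⟩

theorem extremePoints_subset_image_support_mul (hφ : Function.Injective φ)
    {f : AddMonoidAlgebra R M} (g : AddMonoidAlgebra R M)
    (hf : ∀ a ∈ f.coeff.support,
      φ a ∈ Set.extremePoints 𝕜 (convexHull 𝕜 (φ '' f.coeff.support)) →
        f.coeff a ∈ nonZeroDivisors R) :
    Set.extremePoints 𝕜 (convexHull 𝕜 (φ '' f.coeff.support) +
        convexHull 𝕜 (φ '' g.coeff.support)) ⊆ φ '' (f * g).coeff.support := by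
  intro p hp
  have hp' : p ∈ φ '' f.coeff.support + φ '' g.coeff.support := by
    rw [← convexHull_add] at hp
    exact extremePoints_convexHull_subset hp
  obtain ⟨_, ⟨a, ha, rfl⟩, _, ⟨b, hb, rfl⟩, rfl⟩ := hp'
  have hvertex : φ a ∈ Set.extremePoints 𝕜 (convexHull 𝕜 (φ '' f.coeff.support)) :=
    mem_extremePoints_of_add_mem_extremePoints_add (subset_convexHull 𝕜 _ ⟨a, ha, rfl⟩)
      (subset_convexHull 𝕜 (φ '' g.coeff.support) ⟨b, hb, rfl⟩) hp
  have hcoeff : (f * g).coeff (a + b) = f.coeff a * g.coeff b :=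
    AddMonoidAlgebra.coeff_mul_add_of_uniqueAdd
      (uniqueAdd_of_add_mem_extremePoints φ hφ ha hb hp)
  refine ⟨a + b, ?_, map_add φ a b⟩
  rw [Finset.mem_coe, Finsupp.mem_support_iff, hcoeff]
  exact fun h0 => Finsupp.mem_support_iff.1 hb ((hf a ha hvertex).1 _ h0)

end Support

theorem convexHull_image_support_mul {R M E : Type*} [Semiring R] [AddZeroClass M]
    [AddCommGroup E] [Module ℝ E] [TopologicalSpace E] [T2Space E] [IsTopologicalAddGroup E]
    [ContinuousSMul ℝ E] [LocallyConvexSpace ℝ E] (φ : M →+ E) (hφ : Function.Injective φ)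
    {f : AddMonoidAlgebra R M} (g : AddMonoidAlgebra R M)
    (hf : ∀ a ∈ f.coeff.support,
      φ a ∈ Set.extremePoints ℝ (convexHull ℝ (φ '' f.coeff.support)) →
        f.coeff a ∈ nonZeroDivisors R) :
    convexHull ℝ (φ '' (f * g).coeff.support) =
      convexHull ℝ (φ '' f.coeff.support) + convexHull ℝ (φ '' g.coeff.support) := by
  rw [← convexHull_add]
  refine convexHull_eq_of_extremePoints_subset
    ((f.coeff.support.finite_toSet.image φ).add (g.coeff.support.finite_toSet.image φ))
    (image_support_mul_subset φ f g) ?_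
  rw [convexHull_add]
  exact extremePoints_subset_image_support_mul φ hφ g hf

theorem newtonPolytope_nonempty_iff {R : Type*} [CommRing R] {r : ℕ}
    {f : AddMonoidAlgebra R (Fin r → ℤ)} : (newtonPolytope f).Nonempty ↔ f ≠ 0 := by
  rw [newtonPolytope, convexHull_nonempty_iff, Set.image_nonempty, Finset.coe_nonempty,
    Finsupp.support_nonempty_iff, Ne, AddMonoidAlgebra.coeff_eq_zero]

/-- If the coefficients of `e` at the exponents mapping to extreme points of its Newton
polytope are non-zero-divisors, then for any nonzero `β` the product `e * β` is nonzero
and its Newton polytope is the Minkowski sum of those of `e` and `β`. -/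
theorem newtonPolytope_mul {R : Type*} [CommRing R] (r : ℕ)
    (e β : AddMonoidAlgebra R (Fin r → ℤ)) (he : e ≠ 0) (hβ : β ≠ 0)
    (hreg : ∀ lam ∈ e.coeff.support,
      (fun i => ((lam i : ℝ))) ∈ Set.extremePoints ℝ (newtonPolytope e) →
        e.coeff lam ∈ nonZeroDivisors R) :
    e * β ≠ 0 ∧ newtonPolytope (e * β) = newtonPolytope e + newtonPolytope β := by
  have hpoly : newtonPolytope (e * β) = newtonPolytope e + newtonPolytope β :=
    convexHull_image_support_mul ((Int.castAddHom ℝ).compLeft (Fin r))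
      Int.cast_injective.comp_left β hreg
  refine ⟨newtonPolytope_nonempty_iff.1 ?_, hpoly⟩
  rw [hpoly]
  exact (newtonPolytope_nonempty_iff.2 he).add (newtonPolytope_nonempty_iff.2 hβ)
end
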